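/- For any control sequence u(0),...,u(N), the Lagrangian cost satisfies J₁(u) = x'P(0)x + 2x'Φ(0,N)'λ − λ'G(0)λ + Σ_{k=0}^{N} (u(k) − K(k)x(k) − K₁(k)λ)' Γ(k) (u(k) − K(k)x(k) − K₁(k)λ); hence u*(k) = K(k)x(k) + K₁(k)λ is the unique minimizer of J₁ and the minimum equals x'P(0)x + 2x'Φ(0,N)'λ − λ'G(0)λ. -/

import Mathlib

/-
Completing the square stage by stage. With `V_k(x) = x'P(k)x + 2λ'Φ(k,N)x − λ'G(k)λ`, the
Riccati recursion for `P`, the recursion `Φ(k,N) = Φ(k+1,N)A_c(k)` and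
`G(k) = G(k+1) + Φ(k+1,N)BΓ⁻¹B'Φ(k+1,N)'` are exactly what makes
  `V_{k+1}(A x + B u) + x'Qx + u'Ru = V_k(x) + (u − Kx − K₁λ)'Γ(u − Kx − K₁λ)`
hold for every `x` and `u`. Summing over `k` telescopes to the decomposition, since `V_{N+1}` is the
terminal cost and `V_0(x)` the claimed optimum. Downward induction shows `P(k) ⪰ 0`, so
`Γ(k) = R + B'P(k+1)B ≻ 0`, and the squares are nonnegative and vanish only on the feedback law.
-/

open Matrix

/-- `transMat A N k` is the product `A(N) * A(N-1) * ⋯ * A(k)` for `k ≤ N`,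
and the identity matrix for `k > N`. -/
noncomputable def transMat {n : ℕ} (A : ℕ → Matrix (Fin n) (Fin n) ℝ) (N : ℕ) (k : ℕ) :
    Matrix (Fin n) (Fin n) ℝ :=
  if _ : k ≤ N then transMat A N (k + 1) * A k else 1
termination_by N + 1 - k
decreasing_by omega

/-- Trajectory of `x(k+1) = A(k)x(k) + B(k)u(k)` from `x(0) = x0` under the
open-loop control `u`. -/
noncomputable def traj {n m : ℕ} (A : ℕ → Matrix (Fin n) (Fin n) ℝ)
    (B : ℕ → Matrix (Fin n) (Fin m) ℝ) (x0 : Fin n → ℝ)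
    (u : ℕ → Fin m → ℝ) : ℕ → Fin n → ℝ
  | 0 => x0
  | k + 1 => A k *ᵥ traj A B x0 u k + B k *ᵥ u k

/-- Closed-loop trajectory under the feedback `u(k) = K(k)x(k) + c(k)`. -/
noncomputable def fbTraj {n m : ℕ} (A : ℕ → Matrix (Fin n) (Fin n) ℝ)
    (B : ℕ → Matrix (Fin n) (Fin m) ℝ) (K : ℕ → Matrix (Fin m) (Fin n) ℝ)
    (c : ℕ → Fin m → ℝ) (x0 : Fin n → ℝ) : ℕ → Fin n → ℝ
  | 0 => x0
  | k + 1 => A k *ᵥ fbTraj A B K c x0 k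
      + B k *ᵥ (K k *ᵥ fbTraj A B K c x0 k + c k)

open Finset

namespace Matrix

section CommRing

variable {𝕜 ι κ ι' : Type*} [CommRing 𝕜] [Fintype ι] [Fintype κ] [Fintype ι']

theorem dotProduct_transpose_mul_mulVec (M : Matrix κ ι 𝕜) (N : Matrix κ ι' 𝕜)
    (x : ι → 𝕜) (y : ι' → 𝕜) : x ⬝ᵥ (Mᵀ * N) *ᵥ y = M *ᵥ x ⬝ᵥ N *ᵥ y := by
  rw [← mulVec_mulVec, dotProduct_transpose_mulVec, dotProduct_comm]

theorem IsSymm.dotProduct_mulVec_comm {M : Matrix ι ι 𝕜} (hM : M.IsSymm) (v w : ι → 𝕜) :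
    v ⬝ᵥ M *ᵥ w = w ⬝ᵥ M *ᵥ v := by
  rw [← dotProduct_transpose_mulVec, hM.eq]

theorem IsSymm.dotProduct_mulVec_add_inv_mulVec [DecidableEq ι] {Γ : Matrix ι ι 𝕜}
    (hΓ : Γ.IsSymm) (hdet : IsUnit Γ.det) (u z : ι → 𝕜) :
    (u + Γ⁻¹ *ᵥ z) ⬝ᵥ Γ *ᵥ (u + Γ⁻¹ *ᵥ z) = u ⬝ᵥ Γ *ᵥ u + 2 * (u ⬝ᵥ z) + z ⬝ᵥ Γ⁻¹ *ᵥ z := by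
  have hcancel : Γ *ᵥ (Γ⁻¹ *ᵥ z) = z := by
    rw [mulVec_mulVec, mul_nonsing_inv _ hdet, one_mulVec]
  have hcross : Γ⁻¹ *ᵥ z ⬝ᵥ Γ *ᵥ u = u ⬝ᵥ z := by
    rw [hΓ.dotProduct_mulVec_comm, hcancel]
  simp only [mulVec_add, dotProduct_add, add_dotProduct, hcancel, hcross,
    dotProduct_comm (Γ⁻¹ *ᵥ z) z]
  ring

end CommRing

section Real

theorem PosSemidef.isSymm {ι : Type*} {M : Matrix ι ι ℝ} (hM : M.PosSemidef) : M.IsSymm :=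
  isHermitian_iff_isSymm.mp hM.isHermitian

theorem PosDef.isSymm {ι : Type*} {M : Matrix ι ι ℝ} (hM : M.PosDef) : M.IsSymm :=
  isHermitian_iff_isSymm.mp hM.isHermitian

variable {ι κ : Type*} [Fintype ι] [Fintype κ]

theorem PosSemidef.dotProduct_mulVec_self_nonneg {M : Matrix ι ι ℝ} (hM : M.PosSemidef)
    (v : ι → ℝ) : 0 ≤ v ⬝ᵥ M *ᵥ v := by
  simpa using hM.dotProduct_mulVec_nonneg v

theorem PosDef.dotProduct_mulVec_self_eq_zero_iff {M : Matrix ι ι ℝ} (hM : M.PosDef)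
    {v : ι → ℝ} : v ⬝ᵥ M *ᵥ v = 0 ↔ v = 0 := by
  refine ⟨fun h => ?_, fun h => by simp [h]⟩
  by_contra hv
  simpa [h] using hM.dotProduct_mulVec_pos hv

theorem PosDef.isUnit_det [DecidableEq ι] {M : Matrix ι ι ℝ} (hM : M.PosDef) : IsUnit M.det :=
  hM.det_pos.ne'.isUnit

theorem PosDef.add_transpose_mul_mul_same {R : Matrix κ κ ℝ} {P : Matrix ι ι ℝ} (hR : R.PosDef)
    (hP : P.PosSemidef) (B : Matrix ι κ ℝ) : (R + Bᵀ * P * B).PosDef :=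
  hR.add_posSemidef (hP.conjTranspose_mul_mul_same B)

theorem sum_dotProduct_mulVec_self_nonneg {α : Type*} {s : Finset α} {M : α → Matrix ι ι ℝ}
    (hM : ∀ k ∈ s, (M k).PosSemidef) (v : α → ι → ℝ) : 0 ≤ ∑ k ∈ s, v k ⬝ᵥ M k *ᵥ v k :=
  sum_nonneg fun k hk => (hM k hk).dotProduct_mulVec_self_nonneg (v k)

theorem sum_dotProduct_mulVec_self_eq_zero_iff {α : Type*} {s : Finset α}
    {M : α → Matrix ι ι ℝ} (hM : ∀ k ∈ s, (M k).PosDef) {v : α → ι → ℝ} :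
    ∑ k ∈ s, v k ⬝ᵥ M k *ᵥ v k = 0 ↔ ∀ k ∈ s, v k = 0 := by
  rw [sum_eq_zero_iff_of_nonneg fun k hk =>
    (hM k hk).posSemidef.dotProduct_mulVec_self_nonneg (v k)]
  exact forall₂_congr fun k hk => (hM k hk).dotProduct_mulVec_self_eq_zero_iff

end Real

end Matrix

section CostToGo

variable {𝕜 ι κ : Type*} [CommRing 𝕜] [Fintype ι] [Fintype κ] [DecidableEq κ]

def costToGo (P Φ G : Matrix ι ι 𝕜) (lam x : ι → 𝕜) : 𝕜 :=
  x ⬝ᵥ P *ᵥ x + 2 * (lam ⬝ᵥ Φ *ᵥ x) - lam ⬝ᵥ G *ᵥ lam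

theorem costToGo_step {A Q P P' Φ Φ' G G' : Matrix ι ι 𝕜} {B : Matrix ι κ 𝕜}
    {R Γ : Matrix κ κ 𝕜} {K K₁ : Matrix κ ι 𝕜}
    (hP' : P'.IsSymm) (hΓs : Γ.IsSymm) (hdet : IsUnit Γ.det)
    (hΓ : Γ = R + Bᵀ * P' * B) (hK : K = -(Γ⁻¹ * (Bᵀ * P' * A)))
    (hK₁ : K₁ = -(Γ⁻¹ * (Bᵀ * Φ'ᵀ)))
    (hP : P = Aᵀ * P' * A + Q - Aᵀ * P' * B * Γ⁻¹ * (Bᵀ * P' * A))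
    (hΦ : Φ = Φ' * (A + B * K)) (hG : G = Φ' * (B * Γ⁻¹ * Bᵀ) * Φ'ᵀ + G')
    (lam x : ι → 𝕜) (u : κ → 𝕜) :
    costToGo P' Φ' G' lam (A *ᵥ x + B *ᵥ u) + (x ⬝ᵥ Q *ᵥ x + u ⬝ᵥ R *ᵥ u)
      = costToGo P Φ G lam x
        + (u - K *ᵥ x - K₁ *ᵥ lam) ⬝ᵥ Γ *ᵥ (u - K *ᵥ x - K₁ *ᵥ lam) := by
  set s := (Bᵀ * P' * A) *ᵥ x
  set t := (Bᵀ * Φ'ᵀ) *ᵥ lam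
  have hKx : K *ᵥ x = -(Γ⁻¹ *ᵥ s) := by rw [hK, neg_mulVec, mulVec_mulVec]
  have hv : u - K *ᵥ x - K₁ *ᵥ lam = u + Γ⁻¹ *ᵥ (s + t) := by
    rw [hKx, hK₁, neg_mulVec, ← mulVec_mulVec, mulVec_add]; abel
  have hPBA : Aᵀ * P' * B = (Bᵀ * P' * A)ᵀ := by
    simp only [transpose_mul, transpose_transpose, hP'.eq, Matrix.mul_assoc]
  have hxPx : x ⬝ᵥ P *ᵥ x = A *ᵥ x ⬝ᵥ P' *ᵥ (A *ᵥ x) + x ⬝ᵥ Q *ᵥ x - s ⬝ᵥ Γ⁻¹ *ᵥ s := by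
    rw [hP, hPBA, sub_mulVec, add_mulVec, dotProduct_sub, dotProduct_add, Matrix.mul_assoc,
      dotProduct_transpose_mul_mulVec, Matrix.mul_assoc, dotProduct_transpose_mul_mulVec]
    simp only [s, mulVec_mulVec]
  have hcross : lam ⬝ᵥ Φ' *ᵥ (B *ᵥ (Γ⁻¹ *ᵥ s)) = t ⬝ᵥ Γ⁻¹ *ᵥ s := by
    rw [mulVec_mulVec, mulVec_mulVec,
      show Φ' * B * Γ⁻¹ = (Bᵀ * Φ'ᵀ)ᵀ * Γ⁻¹ by
        simp only [transpose_mul, transpose_transpose, Matrix.mul_assoc],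
      dotProduct_transpose_mul_mulVec]
  have hΦx : lam ⬝ᵥ Φ *ᵥ x = lam ⬝ᵥ Φ' *ᵥ (A *ᵥ x) - t ⬝ᵥ Γ⁻¹ *ᵥ s := by
    rw [hΦ, ← mulVec_mulVec, add_mulVec, ← mulVec_mulVec, hKx, mulVec_neg, ← sub_eq_add_neg,
      mulVec_sub, dotProduct_sub, hcross]
  have hGl : lam ⬝ᵥ G *ᵥ lam = t ⬝ᵥ Γ⁻¹ *ᵥ t + lam ⬝ᵥ G' *ᵥ lam := by
    rw [hG, add_mulVec, dotProduct_add,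
      show Φ' * (B * Γ⁻¹ * Bᵀ) * Φ'ᵀ = (Bᵀ * Φ'ᵀ)ᵀ * (Γ⁻¹ * (Bᵀ * Φ'ᵀ)) by
        simp only [transpose_mul, transpose_transpose, Matrix.mul_assoc],
      dotProduct_transpose_mul_mulVec]
    simp only [t, mulVec_mulVec]
  have huΓu : u ⬝ᵥ Γ *ᵥ u = u ⬝ᵥ R *ᵥ u + B *ᵥ u ⬝ᵥ P' *ᵥ (B *ᵥ u) := by
    rw [hΓ, add_mulVec, dotProduct_add, Matrix.mul_assoc, dotProduct_transpose_mul_mulVec,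
      ← mulVec_mulVec]
  have hus : u ⬝ᵥ s = B *ᵥ u ⬝ᵥ P' *ᵥ (A *ᵥ x) := by
    simp only [s, Matrix.mul_assoc, dotProduct_transpose_mul_mulVec, mulVec_mulVec]
  have hut : u ⬝ᵥ t = lam ⬝ᵥ Φ' *ᵥ (B *ᵥ u) := by
    rw [dotProduct_transpose_mul_mulVec, dotProduct_transpose_mulVec]
  rw [hv, hΓs.dotProduct_mulVec_add_inv_mulVec hdet]
  unfold costToGo
  rw [hxPx, hΦx, hGl, huΓu]
  simp only [mulVec_add, dotProduct_add, add_dotProduct, hus, hut,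
    hP'.dotProduct_mulVec_comm (A *ᵥ x) (B *ᵥ u), hΓs.inv.dotProduct_mulVec_comm t s]
  ring

end CostToGo

theorem riccati_posSemidef_of_succ {ι κ : Type*} [Fintype ι] [Fintype κ] [DecidableEq κ]
    {A Q P P' : Matrix ι ι ℝ} {B : Matrix ι κ ℝ} {R : Matrix κ κ ℝ}
    (hQ : Q.PosSemidef) (hR : R.PosDef) (hP' : P'.PosSemidef)
    (hP : P = Aᵀ * P' * A + Q - Aᵀ * P' * B * (R + Bᵀ * P' * B)⁻¹ * (Bᵀ * P' * A)) :
    P.PosSemidef := by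
  have hΓ := hR.add_transpose_mul_mul_same hP' B
  set Γ := R + Bᵀ * P' * B
  set K := -(Γ⁻¹ * (Bᵀ * P' * A))
  refine .of_dotProduct_mulVec_nonneg ?_ fun x => ?_
  · rw [isHermitian_iff_isSymm, hP]
    simp only [IsSymm, transpose_sub, transpose_add, transpose_mul, transpose_transpose,
      transpose_nonsing_inv, hQ.isSymm.eq, hP'.isSymm.eq, hΓ.isSymm.eq, Matrix.mul_assoc]
  -- with `λ = 0` and the feedback control `u = Kx` the square vanishes
  have h := costToGo_step (Φ' := 0) (G' := 0) (K := K) (K₁ := -(Γ⁻¹ * (Bᵀ * 0ᵀ)))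
    hP'.isSymm hΓ.isSymm hΓ.isUnit_det rfl rfl rfl hP rfl rfl 0 x (K *ᵥ x)
  simp only [costToGo, sub_self, zero_mulVec, mulVec_zero, dotProduct_zero, zero_dotProduct,
    mul_zero, sub_zero, add_zero] at h
  rw [star_trivial, ← h]
  exact add_nonneg (hP'.dotProduct_mulVec_self_nonneg _) (add_nonneg
    (hQ.dotProduct_mulVec_self_nonneg _) (hR.posSemidef.dotProduct_mulVec_self_nonneg _))

theorem transMat_of_le {n : ℕ} (A : ℕ → Matrix (Fin n) (Fin n) ℝ) {N k : ℕ} (h : k ≤ N) :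
    transMat A N k = transMat A N (k + 1) * A k := by
  rw [transMat, dif_pos h]

theorem transMat_succ_self {n : ℕ} (A : ℕ → Matrix (Fin n) (Fin n) ℝ) (N : ℕ) :
    transMat A N (N + 1) = 1 := by
  rw [transMat, dif_neg (by omega)]

theorem traj_feedback {n m : ℕ} (A : ℕ → Matrix (Fin n) (Fin n) ℝ)
    (B : ℕ → Matrix (Fin n) (Fin m) ℝ) (K : ℕ → Matrix (Fin m) (Fin n) ℝ)
    (c : ℕ → Fin m → ℝ) (x0 : Fin n → ℝ) :
    traj A B x0 (fun k => K k *ᵥ fbTraj A B K c x0 k + c k) = fbTraj A B K c x0 := by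
  funext k
  induction k with
  | zero => rfl
  | succ k ih => rw [traj, ih, fbTraj]

section Horizon

variable {n m N : ℕ} {A : ℕ → Matrix (Fin n) (Fin n) ℝ} {B : ℕ → Matrix (Fin n) (Fin m) ℝ}
  {Q : Matrix (Fin n) (Fin n) ℝ} {R : Matrix (Fin m) (Fin m) ℝ}

theorem riccati_posSemidef {H : Matrix (Fin n) (Fin n) ℝ} {P : ℕ → Matrix (Fin n) (Fin n) ℝ}
    (hQ : Q.PosSemidef) (hH : H.PosSemidef) (hR : R.PosDef) (hPterm : P (N + 1) = H)
    (hP : ∀ k ≤ N, P k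
        = (A k)ᵀ * P (k + 1) * A k + Q
          - (A k)ᵀ * P (k + 1) * B k * (R + (B k)ᵀ * P (k + 1) * B k)⁻¹
              * ((B k)ᵀ * P (k + 1) * A k))
    {k : ℕ} (hk : k ≤ N + 1) : (P k).PosSemidef := by
  induction hk using Nat.decreasingInduction with
  | self => rwa [hPterm]
  | of_succ k hk ih => exact riccati_posSemidef_of_succ hQ hR ih (hP k (by omega))

theorem sum_stageCost_add_costToGo {P Φ G : ℕ → Matrix (Fin n) (Fin n) ℝ}
    {Γ : ℕ → Matrix (Fin m) (Fin m) ℝ} {K K₁ : ℕ → Matrix (Fin m) (Fin n) ℝ}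
    (hPs : ∀ k ≤ N, (P (k + 1)).IsSymm) (hΓs : ∀ k ≤ N, (Γ k).IsSymm)
    (hdet : ∀ k ≤ N, IsUnit (Γ k).det)
    (hΓ : ∀ k ≤ N, Γ k = R + (B k)ᵀ * P (k + 1) * B k)
    (hK : ∀ k ≤ N, K k = -((Γ k)⁻¹ * ((B k)ᵀ * P (k + 1) * A k)))
    (hK₁ : ∀ k ≤ N, K₁ k = -((Γ k)⁻¹ * ((B k)ᵀ * (Φ (k + 1))ᵀ)))
    (hP : ∀ k ≤ N, P k = (A k)ᵀ * P (k + 1) * A k + Q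
        - (A k)ᵀ * P (k + 1) * B k * (Γ k)⁻¹ * ((B k)ᵀ * P (k + 1) * A k))
    (hΦ : ∀ k ≤ N, Φ k = Φ (k + 1) * (A k + B k * K k))
    (hG : ∀ k ≤ N, G k = Φ (k + 1) * (B k * (Γ k)⁻¹ * (B k)ᵀ) * (Φ (k + 1))ᵀ + G (k + 1))
    (x0 lam : Fin n → ℝ) (u : ℕ → Fin m → ℝ) :
    ∑ k ∈ range (N + 1), (traj A B x0 u k ⬝ᵥ Q *ᵥ traj A B x0 u k + u k ⬝ᵥ R *ᵥ u k)
        + costToGo (P (N + 1)) (Φ (N + 1)) (G (N + 1)) lam (traj A B x0 u (N + 1))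
      = costToGo (P 0) (Φ 0) (G 0) lam x0
        + ∑ k ∈ range (N + 1), (u k - K k *ᵥ traj A B x0 u k - K₁ k *ᵥ lam)
            ⬝ᵥ Γ k *ᵥ (u k - K k *ᵥ traj A B x0 u k - K₁ k *ᵥ lam) := by
  set V := fun k => costToGo (P k) (Φ k) (G k) lam (traj A B x0 u k)
  have hstep : ∀ k ∈ range (N + 1),
      (traj A B x0 u k ⬝ᵥ Q *ᵥ traj A B x0 u k + u k ⬝ᵥ R *ᵥ u k)
        - (u k - K k *ᵥ traj A B x0 u k - K₁ k *ᵥ lam)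
            ⬝ᵥ Γ k *ᵥ (u k - K k *ᵥ traj A B x0 u k - K₁ k *ᵥ lam) = V k - V (k + 1) := by
    intro k hk
    have hkN : k ≤ N := Nat.lt_succ_iff.mp (mem_range.mp hk)
    have h := costToGo_step (hPs k hkN) (hΓs k hkN) (hdet k hkN) (hΓ k hkN) (hK k hkN)
      (hK₁ k hkN) (hP k hkN) (hΦ k hkN) (hG k hkN) lam (traj A B x0 u k) (u k)
    rw [← traj] at h
    simp only [V]
    linarith
  have htel := sum_range_sub' V (N + 1)
  rw [← sum_congr rfl hstep, sum_sub_distrib] at htel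
  simp only [V, show traj A B x0 u 0 = x0 from rfl] at htel
  linarith

theorem lagrangianCost_eq_add_sum_sq {H : Matrix (Fin n) (Fin n) ℝ}
    {P Ac : ℕ → Matrix (Fin n) (Fin n) ℝ} {Γ : ℕ → Matrix (Fin m) (Fin m) ℝ}
    {K K₁ : ℕ → Matrix (Fin m) (Fin n) ℝ}
    (hPs : ∀ k ≤ N, (P (k + 1)).IsSymm) (hΓs : ∀ k ≤ N, (Γ k).IsSymm)
    (hdet : ∀ k ≤ N, IsUnit (Γ k).det) (hPterm : P (N + 1) = H)
    (hP : ∀ k ≤ N, P k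
        = (A k)ᵀ * P (k + 1) * A k + Q
          - (A k)ᵀ * P (k + 1) * B k * (R + (B k)ᵀ * P (k + 1) * B k)⁻¹
              * ((B k)ᵀ * P (k + 1) * A k))
    (hΓ : ∀ k ≤ N, Γ k = R + (B k)ᵀ * P (k + 1) * B k)
    (hK : ∀ k ≤ N, K k = -((Γ k)⁻¹ * ((B k)ᵀ * P (k + 1) * A k)))
    (hAc : ∀ k ≤ N, Ac k = A k + B k * K k)
    (hK₁ : ∀ k ≤ N, K₁ k = -((Γ k)⁻¹ * ((B k)ᵀ * (transMat Ac N (k + 1))ᵀ)))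
    (x0 lam : Fin n → ℝ) (u : ℕ → Fin m → ℝ) :
    ∑ k ∈ range (N + 1), (traj A B x0 u k ⬝ᵥ Q *ᵥ traj A B x0 u k + u k ⬝ᵥ R *ᵥ u k)
        + traj A B x0 u (N + 1) ⬝ᵥ H *ᵥ traj A B x0 u (N + 1)
        + 2 * (lam ⬝ᵥ traj A B x0 u (N + 1))
      = x0 ⬝ᵥ P 0 *ᵥ x0 + 2 * (x0 ⬝ᵥ (transMat Ac N 0)ᵀ *ᵥ lam)
          - lam ⬝ᵥ (∑ j ∈ Icc 0 N,
              transMat Ac N (j + 1) * (B j * (Γ j)⁻¹ * (B j)ᵀ) * (transMat Ac N (j + 1))ᵀ) *ᵥ lam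
        + ∑ k ∈ range (N + 1), (u k - K k *ᵥ traj A B x0 u k - K₁ k *ᵥ lam)
            ⬝ᵥ Γ k *ᵥ (u k - K k *ᵥ traj A B x0 u k - K₁ k *ᵥ lam) := by
  have h := sum_stageCost_add_costToGo (Φ := transMat Ac N)
    (G := fun j => ∑ i ∈ Icc j N,
      transMat Ac N (i + 1) * (B i * (Γ i)⁻¹ * (B i)ᵀ) * (transMat Ac N (i + 1))ᵀ)
    hPs hΓs hdet hΓ hK hK₁ (fun k hk => by rw [hP k hk, hΓ k hk])
    (fun k hk => by rw [transMat_of_le Ac hk, hAc k hk])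
    (fun k hk => by rw [← add_sum_Ioc_eq_sum_Icc hk, Icc_add_one_left_eq_Ioc]) x0 lam u
  rw [dotProduct_transpose_mulVec _ x0 lam]
  simp only [costToGo, hPterm, transMat_succ_self, one_mulVec,
    Icc_eq_empty (by omega : ¬N + 1 ≤ N), sum_empty, zero_mulVec, dotProduct_zero, sub_zero] at h
  linarith

end Horizon

/-- Sum-of-squares decomposition of the Lagrangian LQ cost: for every control
sequence, `J₁(u)` equals the optimal value plus a sum of `Γ(k)`-weighted
squares; hence the feedback law is the unique minimizer and the minimum is
`x'P(0)x + 2x'Φ(0,N)'λ − λ'G(0)λ`. -/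
theorem cost_sum_of_squares {n m N : ℕ}
    (A : ℕ → Matrix (Fin n) (Fin n) ℝ) (B : ℕ → Matrix (Fin n) (Fin m) ℝ)
    (Q H : Matrix (Fin n) (Fin n) ℝ) (R : Matrix (Fin m) (Fin m) ℝ)
    (hQ : Q.PosSemidef) (hH : H.PosSemidef) (hR : R.PosDef)
    (P : ℕ → Matrix (Fin n) (Fin n) ℝ)
    (hPterm : P (N + 1) = H)
    (hP : ∀ k ≤ N, P k
        = (A k)ᵀ * P (k + 1) * A k + Q
          - (A k)ᵀ * P (k + 1) * B k * (R + (B k)ᵀ * P (k + 1) * B k)⁻¹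
              * ((B k)ᵀ * P (k + 1) * A k))
    (Γ : ℕ → Matrix (Fin m) (Fin m) ℝ)
    (hΓ : ∀ k ≤ N, Γ k = R + (B k)ᵀ * P (k + 1) * B k)
    (K : ℕ → Matrix (Fin m) (Fin n) ℝ)
    (hK : ∀ k ≤ N, K k = -((Γ k)⁻¹ * ((B k)ᵀ * P (k + 1) * A k)))
    (Ac : ℕ → Matrix (Fin n) (Fin n) ℝ)
    (hAc : ∀ k ≤ N, Ac k = A k + B k * K k)
    (K₁ : ℕ → Matrix (Fin m) (Fin n) ℝ)
    (hK₁ : ∀ k ≤ N, K₁ k = -((Γ k)⁻¹ * ((B k)ᵀ * (transMat Ac N (k + 1))ᵀ)))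
    (x0 lam : Fin n → ℝ)
    (J : (ℕ → Fin m → ℝ) → ℝ)
    (hJ : ∀ u, J u
        = ∑ k ∈ Finset.range (N + 1),
            (traj A B x0 u k ⬝ᵥ Q *ᵥ traj A B x0 u k + u k ⬝ᵥ R *ᵥ u k)
          + traj A B x0 u (N + 1) ⬝ᵥ H *ᵥ traj A B x0 u (N + 1)
          + 2 * (lam ⬝ᵥ traj A B x0 u (N + 1)))
    (optval : ℝ)
    (hoptval : optval
        = x0 ⬝ᵥ P 0 *ᵥ x0 + 2 * (x0 ⬝ᵥ (transMat Ac N 0)ᵀ *ᵥ lam)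
          - lam ⬝ᵥ (∑ j ∈ Finset.Icc 0 N,
              transMat Ac N (j + 1) * (B j * (Γ j)⁻¹ * (B j)ᵀ)
                * (transMat Ac N (j + 1))ᵀ) *ᵥ lam)
    (ustar : ℕ → Fin m → ℝ)
    (hustar : ∀ k, ustar k
        = K k *ᵥ fbTraj A B K (fun j => K₁ j *ᵥ lam) x0 k + K₁ k *ᵥ lam) :
    (∀ u, J u = optval
        + ∑ k ∈ Finset.range (N + 1),
            (u k - K k *ᵥ traj A B x0 u k - K₁ k *ᵥ lam)
              ⬝ᵥ Γ k *ᵥ (u k - K k *ᵥ traj A B x0 u k - K₁ k *ᵥ lam))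
      ∧ (∀ u, J ustar ≤ J u)
      ∧ (∀ u, J u = J ustar
          → ∀ k ≤ N, u k = K k *ᵥ traj A B x0 u k + K₁ k *ᵥ lam)
      ∧ J ustar = optval := by
  have hPpsd : ∀ k ≤ N + 1, (P k).PosSemidef := fun k hk =>
    riccati_posSemidef hQ hH hR hPterm hP hk
  have hΓpd : ∀ k ≤ N, (Γ k).PosDef := fun k hk => by
    rw [hΓ k hk]; exact hR.add_transpose_mul_mul_same (hPpsd (k + 1) (by omega)) (B k)
  have hΓpd' : ∀ k ∈ range (N + 1), (Γ k).PosDef := fun k hk =>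
    hΓpd k (Nat.lt_succ_iff.mp (mem_range.mp hk))
  have hdecomp : ∀ u, J u = optval + ∑ k ∈ range (N + 1),
      (u k - K k *ᵥ traj A B x0 u k - K₁ k *ᵥ lam)
        ⬝ᵥ Γ k *ᵥ (u k - K k *ᵥ traj A B x0 u k - K₁ k *ᵥ lam) := fun u => by
    rw [hJ, hoptval]
    exact lagrangianCost_eq_add_sum_sq (fun k hk => (hPpsd (k + 1) (by omega)).isSymm)
      (fun k hk => (hΓpd k hk).isSymm) (fun k hk => (hΓpd k hk).isUnit_det) hPterm hP hΓ hK hAc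
      hK₁ x0 lam u
  have hJstar : J ustar = optval := by
    rw [hdecomp, funext hustar, traj_feedback]
    simp
  refine ⟨hdecomp, fun u => ?_, fun u hu k hk => ?_, hJstar⟩
  · rw [hJstar, hdecomp u]
    exact le_add_of_nonneg_right
      (sum_dotProduct_mulVec_self_nonneg (fun k hk => (hΓpd' k hk).posSemidef) _)
  · rw [hdecomp u, hJstar, add_eq_left, sum_dotProduct_mulVec_self_eq_zero_iff hΓpd'] at hu
    rw [← sub_eq_zero, ← sub_sub]
    exact hu k (mem_range.mpr (by omega))
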